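/- For any nonzero g_R, g_F ∈ ℝ^d, the NGDiff direction g = g_R/‖g_R‖ − g_F/‖g_F‖ lies in the linear span of g_R and g_F, and equals the dynamic scalarization gradient (1/λ)·(c·g_R − (1−c)·g_F) where c = (1/‖g_R‖)/(1/‖g_R‖ + 1/‖g_F‖) and λ = 1/(1/‖g_R‖ + 1/‖g_F‖). -/
import Mathlib


/-- NGDiff is a dynamic scalarization: the NGDiff direction lies in the span of
`gR, gF` and equals `(1/λ) • (c • gR - (1-c) • gF)` for the specific weight
`c = (1/‖gR‖)/(1/‖gR‖ + 1/‖gF‖)` and scale `λ = 1/(1/‖gR‖ + 1/‖gF‖)`. -/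
theorem ngdiff_is_dynamic_scalarization {d : ℕ} (gR gF : EuclideanSpace ℝ (Fin d))
    (hR : gR ≠ 0) (hF : gF ≠ 0) :
    (‖gR‖⁻¹ • gR - ‖gF‖⁻¹ • gF) ∈ Submodule.span ℝ ({gR, gF} : Set (EuclideanSpace ℝ (Fin d))) ∧
      ‖gR‖⁻¹ • gR - ‖gF‖⁻¹ • gF =
        (1 / (1 / (1 / ‖gR‖ + 1 / ‖gF‖))) •
          (((1 / ‖gR‖) / (1 / ‖gR‖ + 1 / ‖gF‖)) • gR -
            (1 - (1 / ‖gR‖) / (1 / ‖gR‖ + 1 / ‖gF‖)) • gF) := by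
  have hRn : ‖gR‖ ≠ 0 := norm_ne_zero_iff.mpr hR
  have hFn : ‖gF‖ ≠ 0 := norm_ne_zero_iff.mpr hF
  have hs : 1 / ‖gR‖ + 1 / ‖gF‖ ≠ 0 := by positivity
  constructor
  · exact Submodule.sub_mem _
      (Submodule.smul_mem _ _ (Submodule.subset_span (by simp)))
      (Submodule.smul_mem _ _ (Submodule.subset_span (by simp)))
  · rw [smul_sub, smul_smul, smul_smul]
    congr 1
    · congr 1
      field_simp
    · congr 1
      field_simp
      ring
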